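/- Let σ > 0, n ≥ 1, and β real with 1 + β − n > 0. Define H(c) = c^{(1+β−n)/4}·((ξ*(c))^{(1+β+n)/2}·exp(c·ξ*(c) − ξ*(c)²/σ))^{1/2} with ξ*(c) = (cσ + √(c²σ² + 4σ(1+β+n)))/4. Then H(c) → 0 as c → 0⁺ and H(c) → ∞ as c → ∞. -/

import Mathlib

open Real Filter

/-!
With `B = 1 + β + n`, the point `ξ*(c)` is the positive root of `2ξ² − cσξ − σB/2 = 0`, so the
exponent `cξ* − ξ*²/σ` equals `cξ*/2 − B/4`. Near `0` the factor `(ξ*^{B/2} e^{…})^{1/2}` is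
continuous and `c^{(1+β−n)/4} → 0`; at infinity `ξ* ≥ cσ/4`, so every factor tends to infinity.
-/

namespace Multiquadric

noncomputable def xiStar (σ B c : ℝ) : ℝ :=
  (c * σ + √(c ^ 2 * σ ^ 2 + 4 * σ * B)) / 4

noncomputable def amplitude (σ B c : ℝ) : ℝ :=
  (xiStar σ B c ^ (B / 2) * exp (c * xiStar σ B c - xiStar σ B c ^ 2 / σ)) ^ ((1 : ℝ) / 2)

variable {σ B : ℝ}

theorem continuous_xiStar : Continuous (xiStar σ B) := by
  unfold xiStar
  fun_prop

theorem continuous_amplitude (hB : 0 ≤ B) : Continuous (amplitude σ B) := by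
  have hξ : Continuous (xiStar σ B) := continuous_xiStar
  unfold amplitude
  refine (continuous_rpow_const (by norm_num)).comp (Continuous.mul ?_ (by fun_prop))
  exact (continuous_rpow_const (by linarith)).comp hξ

theorem mul_div_four_le_xiStar (c : ℝ) : c * σ / 4 ≤ xiStar σ B c := by
  have := sqrt_nonneg (c ^ 2 * σ ^ 2 + 4 * σ * B)
  unfold xiStar
  linarith

theorem tendsto_xiStar_atTop (hσ : 0 < σ) : Tendsto (xiStar σ B) atTop atTop :=
  tendsto_atTop_mono mul_div_four_le_xiStar
    ((tendsto_id.atTop_mul_const hσ).atTop_div_const (by norm_num))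

theorem xiStar_sq_div (hσ : 0 < σ) (hB : 0 ≤ B) (c : ℝ) :
    xiStar σ B c ^ 2 / σ = c * xiStar σ B c / 2 + B / 4 := by
  have hs := sq_sqrt (show 0 ≤ c ^ 2 * σ ^ 2 + 4 * σ * B by positivity)
  unfold xiStar
  rw [div_eq_iff hσ.ne']
  linear_combination hs / 16

theorem tendsto_exponent_atTop (hσ : 0 < σ) (hB : 0 ≤ B) :
    Tendsto (fun c => c * xiStar σ B c - xiStar σ B c ^ 2 / σ) atTop atTop := by
  have hprod : Tendsto (fun c => c * xiStar σ B c) atTop atTop :=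
    tendsto_id.atTop_mul_atTop₀ (tendsto_xiStar_atTop hσ)
  have hhalf := tendsto_atTop_add_const_right _ (-(B / 4)) (hprod.atTop_div_const two_pos)
  refine hhalf.congr fun c => ?_
  rw [xiStar_sq_div hσ hB]
  ring

theorem tendsto_amplitude_atTop (hσ : 0 < σ) (hB : 0 < B) :
    Tendsto (amplitude σ B) atTop atTop := by
  have hpow := (tendsto_rpow_atTop (half_pos hB)).comp (tendsto_xiStar_atTop (B := B) hσ)
  have hexp := tendsto_exp_atTop.comp (tendsto_exponent_atTop hσ hB.le)
  exact (tendsto_rpow_atTop (by norm_num)).comp (hpow.atTop_mul_atTop₀ hexp)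

end Multiquadric

open Multiquadric in
theorem stmt_14_general (n : ℕ) (σ β : ℝ) (hσ : 0 < σ)
    (hgt : 0 < 1 + β - (n : ℝ))
    (ξstar : ℝ → ℝ)
    (hξ : ∀ c : ℝ, ξstar c =
      (c * σ + Real.sqrt (c ^ 2 * σ ^ 2 + 4 * σ * (1 + β + (n : ℝ)))) / 4)
    (H : ℝ → ℝ)
    (hH : ∀ c : ℝ, H c =
      c ^ ((1 + β - (n : ℝ)) / 4) *
        ((ξstar c) ^ ((1 + β + (n : ℝ)) / 2) *
          Real.exp (c * ξstar c - (ξstar c) ^ 2 / σ)) ^ ((1 : ℝ) / 2)) :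
    Tendsto H (nhdsWithin 0 (Set.Ioi 0)) (nhds 0) ∧ Tendsto H atTop atTop := by
  have ha : 0 < (1 + β - (n : ℝ)) / 4 := by linarith
  have hB : 0 < 1 + β + (n : ℝ) := by linarith [n.cast_nonneg (α := ℝ)]
  obtain rfl : ξstar = xiStar σ (1 + β + n) := funext hξ
  obtain rfl : H = fun c => c ^ ((1 + β - (n : ℝ)) / 4) * amplitude σ (1 + β + n) c :=
    funext hH
  constructor
  · have hcont : Continuous fun c : ℝ => c ^ ((1 + β - (n : ℝ)) / 4) * amplitude σ (1 + β + n) c :=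
      (continuous_rpow_const ha.le).mul (continuous_amplitude hB.le)
    simpa [zero_rpow ha.ne'] using (hcont.tendsto 0).mono_left nhdsWithin_le_nhds
  · exact (tendsto_rpow_atTop ha).atTop_mul_atTop₀ (tendsto_amplitude_atTop hσ hB)

theorem stmt_14 (n : ℕ) (hn : 1 ≤ n) (σ β : ℝ) (hσ : 0 < σ)
    (hgt : 0 < 1 + β - (n : ℝ))
    (ξstar : ℝ → ℝ)
    (hξ : ∀ c : ℝ, ξstar c =
      (c * σ + Real.sqrt (c ^ 2 * σ ^ 2 + 4 * σ * (1 + β + (n : ℝ)))) / 4)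
    (H : ℝ → ℝ)
    (hH : ∀ c : ℝ, H c =
      c ^ ((1 + β - (n : ℝ)) / 4) *
        ((ξstar c) ^ ((1 + β + (n : ℝ)) / 2) *
          Real.exp (c * ξstar c - (ξstar c) ^ 2 / σ)) ^ ((1 : ℝ) / 2)) :
    Tendsto H (nhdsWithin 0 (Set.Ioi 0)) (nhds 0) ∧ Tendsto H atTop atTop :=
  stmt_14_general n σ β hσ hgt ξstar hξ H hH
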